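/- arXiv:1205.3517 — 2 statements merged into one kernel-verified Lean document; each statement's English description precedes it below -/
import Mathlib

section
/- For all (a,b,c) in the region D = {(a,b,c) ∈ ℝ³ : 1/2 ≥ a ≥ b ≥ c ≥ 1−a−b−c ≥ 0}, one has γ_max(a,b,c) = 2·ln 2 − h(a+c) − h(b+c) ≤ (3/4)·ln 3 − ln 2, and equality holds at the point (a,b,c) = (1/2, 1/4, 1/4). -/
/-- The binary entropy function `h(x) = -x log x - (1-x) log (1-x)`. -/
noncomputable def binEnt (x : ℝ) : ℝ := -x * Real.log x - (1 - x) * Real.log (1 - x)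

/-- The domain of ordered two-qubit spectra `1/2 ≥ a ≥ b ≥ c ≥ d ≥ 0`
with `d = 1 - a - b - c`. -/
def D : Set (ℝ × ℝ × ℝ) :=
  {p | 1 / 2 ≥ p.1 ∧ p.1 ≥ p.2.1 ∧ p.2.1 ≥ p.2.2 ∧
       p.2.2 ≥ 1 - p.1 - p.2.1 - p.2.2 ∧ 1 - p.1 - p.2.1 - p.2.2 ≥ 0}

/-- The gap `γ_max(a,b,c) = 2 log 2 - h(a+c) - h(b+c)` between maximal separable
and maximal classical mutual information. -/
noncomputable def gammaMax (p : ℝ × ℝ × ℝ) : ℝ :=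
  2 * Real.log 2 - binEnt (p.1 + p.2.2) - binEnt (p.2.1 + p.2.2)

lemma binEnt_eq (x : ℝ) : binEnt x = Real.binEntropy x := by
  unfold binEnt Real.binEntropy
  rw [Real.log_inv, Real.log_inv]; ring

lemma hConc : ConcaveOn ℝ (Set.Icc (0:ℝ) 1) Real.binEntropy :=
  Real.strictConcave_binEntropy.concaveOn

lemma ent_ge_min {u v y : ℝ} (h0 : 0 ≤ u) (huy : u ≤ y) (hyv : y ≤ v) (hv1 : v ≤ 1) :
    min (Real.binEntropy u) (Real.binEntropy v) ≤ Real.binEntropy y := by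
  apply hConc.ge_on_segment (Set.mem_Icc.2 ⟨h0, (huy.trans hyv).trans hv1⟩)
    (Set.mem_Icc.2 ⟨h0.trans (huy.trans hyv), hv1⟩)
  rw [segment_eq_Icc (huy.trans hyv)]
  exact ⟨huy, hyv⟩

lemma log4 : Real.log 4 = 2 * Real.log 2 := by
  rw [show (4:ℝ) = 2^2 by norm_num, Real.log_pow]; norm_num

lemma binEnt_half : binEnt (1/2) = Real.log 2 := by
  unfold binEnt
  rw [show (1:ℝ) - 1/2 = 1/2 by norm_num, show (1:ℝ)/2 = 2⁻¹ by norm_num, Real.log_inv]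
  ring

lemma binEnt_34 : binEnt (3/4) = 2 * Real.log 2 - 3/4 * Real.log 3 := by
  unfold binEnt
  rw [show (1:ℝ) - 3/4 = 1/4 by norm_num,
    Real.log_div (by norm_num : (3:ℝ) ≠ 0) (by norm_num : (4:ℝ) ≠ 0),
    show (1:ℝ)/4 = 4⁻¹ by norm_num, Real.log_inv, log4]
  ring

lemma binEnt_13 : binEnt (1/3) = Real.log 3 - 2/3 * Real.log 2 := by
  unfold binEnt
  rw [show (1:ℝ) - 1/3 = 2/3 by norm_num,
    Real.log_div (by norm_num : (2:ℝ) ≠ 0) (by norm_num : (3:ℝ) ≠ 0),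
    show (1:ℝ)/3 = 3⁻¹ by norm_num, Real.log_inv]
  ring

lemma binEnt_23 : binEnt (2/3) = Real.log 3 - 2/3 * Real.log 2 := by
  rw [← binEnt_13, binEnt_eq, binEnt_eq, show (2:ℝ)/3 = 1 - 1/3 by norm_num,
    Real.binEntropy_one_sub]

lemma log_num1 : 4 * Real.log 2 ≤ 3 * Real.log 3 := by
  have h := Real.log_le_log (by positivity : (0:ℝ) < 2^4) (by norm_num : (2:ℝ)^4 ≤ 3^3)
  rw [Real.log_pow, Real.log_pow] at h
  push_cast at h
  linarith

lemma log_num2 : 52 * Real.log 2 ≤ 33 * Real.log 3 := by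
  have h := Real.log_le_log (by positivity : (0:ℝ) < 2^52) (by norm_num : (2:ℝ)^52 ≤ 3^33)
  rw [Real.log_pow, Real.log_pow] at h
  push_cast at h
  linarith

/-- On `D`, `γ_max ≤ (3/4) log 3 - log 2`, with equality at `(1/2, 1/4, 1/4)`. -/
theorem gammaMax_le :
    (∀ p ∈ D, gammaMax p ≤ 3 / 4 * Real.log 3 - Real.log 2) ∧
    gammaMax (1 / 2, 1 / 4, 1 / 4) = 3 / 4 * Real.log 3 - Real.log 2 := by
  constructor
  · rintro ⟨a, b, c⟩ ⟨h1, h2, h3, h4, h5⟩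
    simp only at h1 h2 h3 h4 h5
    set x : ℝ := a + c with hxdef
    set y : ℝ := b + c with hydef
    have hyx : y ≤ x := by simp only [hxdef, hydef]; linarith
    have hxy1 : 1 ≤ x + y := by simp only [hxdef, hydef]; linarith
    have h2x : 2*x - 1 ≤ y := by simp only [hxdef, hydef]; linarith
    have h2x2 : y ≤ 2 - 2*x := by simp only [hxdef, hydef]; linarith
    have hx12 : 1/2 ≤ x := by linarith
    have hx34 : x ≤ 3/4 := by linarith
    have key : 3 * Real.log 2 - 3/4 * Real.log 3 ≤
        Real.binEntropy x + Real.binEntropy y := by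
      rcases le_total x (2/3) with hc | hc
      · -- x ≤ 2/3 : h(y) ≥ h(x), and h(x) ≥ min(h(1/2), h(2/3))
        have hy : Real.binEntropy x ≤ Real.binEntropy y := by
          have := ent_ge_min (u := 1 - x) (v := x) (by linarith) (by linarith) hyx
            (by linarith)
          rwa [Real.binEntropy_one_sub, min_self] at this
        have hx : min (Real.binEntropy (1/2)) (Real.binEntropy (2/3)) ≤
            Real.binEntropy x :=
          ent_ge_min (by norm_num) hx12 hc (by norm_num)
        have e1 : Real.binEntropy (1/2) = Real.log 2 := by
          rw [← binEnt_eq, binEnt_half]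
        have e2 : Real.binEntropy (2/3) = Real.log 3 - 2/3 * Real.log 2 := by
          rw [← binEnt_eq, binEnt_23]
        rw [e1, e2] at hx
        have hmin : 3/2 * Real.log 2 - 3/8 * Real.log 3 ≤
            min (Real.log 2) (Real.log 3 - 2/3 * Real.log 2) := by
          apply le_min
          · linarith [log_num1]
          · linarith [log_num2]
        linarith
      · -- 2/3 ≤ x : h(y) ≥ h(2x-1), chord bound on [2/3, 3/4]
        have hy : Real.binEntropy (2*x - 1) ≤ Real.binEntropy y := by
          have := ent_ge_min (u := 2*x - 1) (v := 2 - 2*x) (by linarith) h2x h2x2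
            (by linarith)
          rw [show (2:ℝ) - 2*x = 1 - (2*x - 1) by ring, Real.binEntropy_one_sub,
            min_self] at this
          exact this
        set t : ℝ := 12 * (3/4 - x) with htdef
        have ht0 : 0 ≤ t := by simp only [htdef]; linarith
        have ht1 : 0 ≤ 1 - t := by simp only [htdef]; linarith
        have hcx := hConc.2 (x := 2/3) (y := 3/4) (Set.mem_Icc.2 ⟨by norm_num, by norm_num⟩)
          (Set.mem_Icc.2 ⟨by norm_num, by norm_num⟩) ht0 ht1 (by ring)
        have hcy := hConc.2 (x := 1/3) (y := 1/2) (Set.mem_Icc.2 ⟨by norm_num, by norm_num⟩)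
          (Set.mem_Icc.2 ⟨by norm_num, by norm_num⟩) ht0 ht1 (by ring)
        simp only [smul_eq_mul] at hcx hcy
        rw [show t * (2/3) + (1 - t) * (3/4) = x by simp only [htdef]; ring] at hcx
        rw [show t * (1/3) + (1 - t) * (1/2) = 2*x - 1 by simp only [htdef]; ring] at hcy
        have e1 : Real.binEntropy (1/2) = Real.log 2 := by
          rw [← binEnt_eq, binEnt_half]
        have e2 : Real.binEntropy (2/3) = Real.log 3 - 2/3 * Real.log 2 := by
          rw [← binEnt_eq, binEnt_23]
        have e3 : Real.binEntropy (1/3) = Real.log 3 - 2/3 * Real.log 2 := by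
          rw [← binEnt_eq, binEnt_13]
        have e4 : Real.binEntropy (3/4) = 2 * Real.log 2 - 3/4 * Real.log 3 := by
          rw [← binEnt_eq, binEnt_34]
        rw [e2, e4] at hcx
        rw [e3, e1] at hcy
        have hpos : 0 ≤ t * (33 * Real.log 3 - 52 * Real.log 2) :=
          mul_nonneg ht0 (by linarith [log_num2])
        nlinarith [hcx, hcy, hy]
    simp only [gammaMax, binEnt_eq]
    linarith
  · simp only [gammaMax]
    rw [show (1:ℝ)/2 + 1/4 = 3/4 by norm_num, show (1:ℝ)/4 + 1/4 = 1/2 by norm_num,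
      binEnt_34, binEnt_half]
    ring
end

section
/- For all (a,b,c) in the region D = {(a,b,c) ∈ ℝ³ : 1/2 ≥ a ≥ b ≥ c ≥ 1−a−b−c ≥ 0}, one has γ_min(a,b,c) = 2·ln 2 − h(a+b) − h(a+c) ≤ ln 2, and equality holds at the point (a,b,c) = (1/2, 1/2, 0). -/
/-- The gap `γ_min(a,b,c) = 2 log 2 - h(a+b) - h(a+c)` between maximal separable
and minimal classical mutual information. -/
noncomputable def gammaMin (p : ℝ × ℝ × ℝ) : ℝ :=
  2 * Real.log 2 - binEnt (p.1 + p.2.1) - binEnt (p.1 + p.2.2)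

/-- Chord bound from concavity: for `x ∈ [1/2, 1]`, `h(x) ≥ 2(1-x) log 2`. -/
lemma binEnt_ge (x : ℝ) (h1 : 1 / 2 ≤ x) (h2 : x ≤ 1) :
    2 * (1 - x) * Real.log 2 ≤ binEnt x := by
  have hc := Real.strictConcave_binEntropy.concaveOn
  have key := hc.2 (show (2:ℝ)⁻¹ ∈ Set.Icc (0:ℝ) 1 by norm_num)
    (show (1:ℝ) ∈ Set.Icc (0:ℝ) 1 by norm_num)
    (show (0:ℝ) ≤ 2 * (1 - x) by linarith) (show (0:ℝ) ≤ 2 * x - 1 by linarith)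
    (show 2 * (1 - x) + (2 * x - 1) = 1 by ring)
  simp only [smul_eq_mul, Real.binEntropy_two_inv, Real.binEntropy_one, mul_zero,
    add_zero, mul_one] at key
  rw [show 2 * (1 - x) * 2⁻¹ + (2 * x - 1) = x from by ring] at key
  rw [binEnt_eq]
  exact key

/-- On `D`, `γ_min ≤ log 2`, with equality at `(1/2, 1/2, 0)`. -/
theorem gammaMin_le :
    (∀ p ∈ D, gammaMin p ≤ Real.log 2) ∧
    gammaMin (1 / 2, 1 / 2, 0) = Real.log 2 := by
  constructor
  · rintro ⟨a, b, c⟩ ⟨h1, h2, h3, h4, h5⟩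
    simp only at h1 h2 h3 h4 h5
    have hx1 : 1 / 2 ≤ a + b := by linarith
    have hx2 : a + b ≤ 1 := by linarith
    have hy1 : 1 / 2 ≤ a + c := by linarith
    have hy2 : a + c ≤ 1 := by linarith
    have hsum : (a + b) + (a + c) ≤ 3 / 2 := by linarith
    have hb1 := binEnt_ge (a + b) hx1 hx2
    have hb2 := binEnt_ge (a + c) hy1 hy2
    have hlog : 0 ≤ Real.log 2 := Real.log_nonneg (by norm_num)
    have : Real.log 2 ≤ binEnt (a + b) + binEnt (a + c) := by nlinarith
    simp only [gammaMin]
    linarith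
  · have h1 : binEnt 1 = 0 := by norm_num [binEnt]
    have h2 : binEnt (1 / 2) = Real.log 2 := by
      norm_num [binEnt]
      rw [one_div, Real.log_inv]
      ring
    simp only [gammaMin]
    rw [show (1:ℝ)/2 + 1/2 = 1 by norm_num, show (1:ℝ)/2 + 0 = 1/2 by norm_num, h1, h2]
    ring
end
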